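/- Additivity for independent pairs: if (X₀,Y₀) and (X₁,Y₁) are independent pairs of finite random variables, then 𝕂((X₀,X₁),(Y₀,Y₁)) = 𝕂(X₀,Y₀) + 𝕂(X₁,Y₁), where + is the Minkowski sum. -/

import Mathlib

open Finset

open Classical in
/-- Probability that random variable `X` (on finite weighted space `p`) equals `a`. -/
noncomputable def prob {Ω α : Type*} [Fintype Ω] (p : Ω → ℝ) (X : Ω → α) (a : α) : ℝ :=
  ∑ ω, if X ω = a then p ω else 0

/-- Shannon entropy of a random variable. -/
noncomputable def ent {Ω α : Type*} [Fintype Ω] [Fintype α] (p : Ω → ℝ) (X : Ω → α) : ℝ :=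
  ∑ a, Real.negMulLog (prob p X a)

/-- Conditional entropy H(X|Y). -/
noncomputable def condEnt {Ω α β : Type*} [Fintype Ω] [Fintype α] [Fintype β]
    (p : Ω → ℝ) (X : Ω → α) (Y : Ω → β) : ℝ :=
  ent p (fun ω => (X ω, Y ω)) - ent p Y

/-- Mutual information I(X;Y). -/
noncomputable def mi {Ω α β : Type*} [Fintype Ω] [Fintype α] [Fintype β]
    (p : Ω → ℝ) (X : Ω → α) (Y : Ω → β) : ℝ :=
  ent p X + ent p Y - ent p (fun ω => (X ω, Y ω))

/-- Conditional mutual information I(X;Y|Z). -/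
noncomputable def cmi {Ω α β γ : Type*} [Fintype Ω] [Fintype α] [Fintype β] [Fintype γ]
    (p : Ω → ℝ) (X : Ω → α) (Y : Ω → β) (Z : Ω → γ) : ℝ :=
  ent p (fun ω => (X ω, Z ω)) + ent p (fun ω => (Y ω, Z ω))
    - ent p (fun ω => ((X ω, Y ω), Z ω)) - ent p Z

/-- `p` is a probability mass function. -/
def IsPMF {Ω : Type*} [Fintype Ω] (p : Ω → ℝ) : Prop :=
  (∀ ω, 0 ≤ p ω) ∧ ∑ ω, p ω = 1

/-- Bipartite graph on 𝒳 ⊔ 𝒴 with an edge between x and y iff the joint pmf μ(x,y) > 0. -/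
def edge {α β : Type*} (μ : α × β → ℝ) : α ⊕ β → α ⊕ β → Prop
  | Sum.inl x, Sum.inr y => 0 < μ (x, y)
  | Sum.inr y, Sum.inl x => 0 < μ (x, y)
  | _, _ => False


/-- Assisted-common-information region 𝕂 of a joint pmf μ on α × β: upward closure of
the triples (I(Q;B|A), I(Q;A|B), I(A;B|Q)) over all auxiliary finite random variables Q,
realized on the canonical space α × β × Fin m with (A,B)-marginal μ. -/
noncomputable def KRegion {α β : Type*} [Fintype α] [Fintype β] (μ : α × β → ℝ) :
    Set (ℝ × ℝ × ℝ) :=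
  { v | ∃ (m : ℕ) (ν : α × β × Fin m → ℝ),
      IsPMF ν ∧
      (∀ ab, prob ν (fun ω => (ω.1, ω.2.1)) ab = μ ab) ∧
      cmi ν (fun ω => ω.2.2) (fun ω => ω.2.1) (fun ω => ω.1) ≤ v.1 ∧
      cmi ν (fun ω => ω.2.2) (fun ω => ω.1) (fun ω => ω.2.1) ≤ v.2.1 ∧
      cmi ν (fun ω => ω.1) (fun ω => ω.2.1) (fun ω => ω.2.2) ≤ v.2.2 ∧
      0 ≤ v.1 ∧ 0 ≤ v.2.1 ∧ 0 ≤ v.2.2 }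

section Infra

set_option linter.unusedSectionVars false

open Classical

variable {Ω Ω' α β γ δ : Type*} [Fintype Ω] [Fintype Ω'] [Fintype α] [Fintype β] [Fintype γ] [Fintype δ]

lemma prob_congr (p : Ω → ℝ) {X : Ω → α} {Y : Ω → β} {a : α} {b : β}
    (h : ∀ ω, X ω = a ↔ Y ω = b) : prob p X a = prob p Y b := by
  classical
  unfold prob
  exact Finset.sum_congr rfl fun ω _ => by simp only [h ω]

lemma probXZ (q : α × β × γ → ℝ)
    (x : α) (z : γ) : prob q (fun t => (t.1, t.2.2)) (x, z) = ∑ y, q (x, y, z) := by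
  classical
  simp [prob, Fintype.sum_prod_type, Prod.ext_iff, ite_and, Finset.sum_ite_eq, Finset.sum_ite_eq']

lemma probYZ (q : α × β × γ → ℝ)
    (y : β) (z : γ) : prob q (fun t => (t.2.1, t.2.2)) (y, z) = ∑ x, q (x, y, z) := by
  classical
  simp [prob, Fintype.sum_prod_type, Prod.ext_iff, ite_and, Finset.sum_ite_eq, Finset.sum_ite_eq']

lemma probXYZ (q : α × β × γ → ℝ)
    (x : α) (y : β) (z : γ) : prob q (fun t => ((t.1, t.2.1), t.2.2)) ((x,y), z) = q (x, y, z) := by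
  classical
  simp [prob, Fintype.sum_prod_type, Prod.ext_iff, ite_and, Finset.sum_ite_eq, Finset.sum_ite_eq']

lemma probZ (q : α × β × γ → ℝ)
    (z : γ) : prob q (fun t => t.2.2) z = ∑ x, ∑ y, q (x, y, z) := by
  classical
  simp [prob, Fintype.sum_prod_type, Prod.ext_iff, ite_and, Finset.sum_ite_eq, Finset.sum_ite_eq']

lemma sc {ι κ : Type*} [Fintype ι] [Fintype κ] (F : ι → κ → ℝ) :
    ∑ i, ∑ j, F i j = ∑ j, ∑ i, F i j := Finset.sum_comm

lemma expand2 (s : ℝ) (F : α → β → ℝ) (h : s = ∑ x, ∑ y, F x y) :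
    Real.negMulLog s = ∑ x, ∑ y, -(F x y * Real.log s) := by
  rw [Real.negMulLog, neg_mul, h, Finset.sum_mul, ← Finset.sum_neg_distrib]
  exact Finset.sum_congr rfl fun x _ => by rw [Finset.sum_mul, ← Finset.sum_neg_distrib]

lemma expand1 {ι : Type*} [Fintype ι] (s : ℝ) (F : ι → ℝ) (h : s = ∑ i, F i) :
    Real.negMulLog s = ∑ i, -(F i * Real.log s) := by
  rw [Real.negMulLog, neg_mul, h, Finset.sum_mul, ← Finset.sum_neg_distrib]

lemma submod (q : α × β × γ → ℝ) (hq : ∀ t, 0 ≤ q t) :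
    ent q (fun t => ((t.1, t.2.1), t.2.2)) + ent q (fun t => t.2.2)
      ≤ ent q (fun t => (t.1, t.2.2)) + ent q (fun t => (t.2.1, t.2.2)) := by
  classical
  set qXZ : α → γ → ℝ := fun x z => ∑ y, q (x, y, z) with hqXZ
  set qYZ : β → γ → ℝ := fun y z => ∑ x, q (x, y, z) with hqYZ
  set qZ : γ → ℝ := fun z => ∑ x, ∑ y, q (x, y, z) with hqZ
  have hqXZ0 : ∀ x z, 0 ≤ qXZ x z := fun x z => Finset.sum_nonneg fun _ _ => hq _
  have hqYZ0 : ∀ y z, 0 ≤ qYZ y z := fun y z => Finset.sum_nonneg fun _ _ => hq _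
  have hqZ0 : ∀ z, 0 ≤ qZ z := fun z =>
    Finset.sum_nonneg fun _ _ => Finset.sum_nonneg fun _ _ => hq _
  have E3 : ent q (fun t => ((t.1, t.2.1), t.2.2))
      = - ∑ x, ∑ y, ∑ z, q (x,y,z) * Real.log (q (x,y,z)) := by
    unfold ent
    rw [Fintype.sum_prod_type, Fintype.sum_prod_type]
    rw [← Finset.sum_neg_distrib]
    refine Finset.sum_congr rfl fun x _ => ?_
    rw [← Finset.sum_neg_distrib]
    refine Finset.sum_congr rfl fun y _ => ?_
    rw [← Finset.sum_neg_distrib]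
    refine Finset.sum_congr rfl fun z _ => ?_
    rw [probXYZ]
    simp [Real.negMulLog]
  have E4 : ent q (fun t => t.2.2)
      = - ∑ x, ∑ y, ∑ z, q (x,y,z) * Real.log (qZ z) := by
    unfold ent
    have step : ∀ z, Real.negMulLog (prob q (fun t => t.2.2) z)
        = ∑ x, ∑ y, -(q (x,y,z) * Real.log (qZ z)) := by
      intro z
      have hz : prob q (fun t => t.2.2) z = qZ z := by rw [probZ, hqZ]
      rw [hz]
      exact expand2 (qZ z) (fun x y => q (x,y,z)) (by rw [hqZ])
    rw [Finset.sum_congr rfl fun z _ => step z]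
    rw [sc (fun z x => ∑ y, -(q (x,y,z) * Real.log (qZ z)))]
    rw [← Finset.sum_neg_distrib]
    refine Finset.sum_congr rfl fun x _ => ?_
    rw [sc (fun z y => -(q (x,y,z) * Real.log (qZ z))), ← Finset.sum_neg_distrib]
    refine Finset.sum_congr rfl fun y _ => ?_
    rw [← Finset.sum_neg_distrib]
  have E1 : ent q (fun t => (t.1, t.2.2))
      = - ∑ x, ∑ y, ∑ z, q (x,y,z) * Real.log (qXZ x z) := by
    unfold ent
    rw [Fintype.sum_prod_type]
    rw [← Finset.sum_neg_distrib]
    refine Finset.sum_congr rfl fun x _ => ?_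
    have step : ∀ z, Real.negMulLog (prob q (fun t => (t.1, t.2.2)) (x, z))
        = ∑ y, -(q (x,y,z) * Real.log (qXZ x z)) := by
      intro z
      have hz : prob q (fun t => (t.1, t.2.2)) (x, z) = qXZ x z := by rw [probXZ, hqXZ]
      rw [hz]
      exact expand1 (qXZ x z) (fun y => q (x,y,z)) (by rw [hqXZ])
    rw [Finset.sum_congr rfl fun z _ => step z]
    rw [sc (fun z y => -(q (x,y,z) * Real.log (qXZ x z))), ← Finset.sum_neg_distrib]
    refine Finset.sum_congr rfl fun y _ => ?_
    rw [← Finset.sum_neg_distrib]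
  have E2 : ent q (fun t => (t.2.1, t.2.2))
      = - ∑ x, ∑ y, ∑ z, q (x,y,z) * Real.log (qYZ y z) := by
    unfold ent
    rw [Fintype.sum_prod_type]
    have step : ∀ y z, Real.negMulLog (prob q (fun t => (t.2.1, t.2.2)) (y, z))
        = ∑ x, -(q (x,y,z) * Real.log (qYZ y z)) := by
      intro y z
      have hz : prob q (fun t => (t.2.1, t.2.2)) (y, z) = qYZ y z := by rw [probYZ, hqYZ]
      rw [hz]
      exact expand1 (qYZ y z) (fun x => q (x,y,z)) (by rw [hqYZ])
    rw [Finset.sum_congr rfl fun y _ => Finset.sum_congr rfl fun z _ => step y z]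
    rw [Finset.sum_congr rfl fun y (_ : y ∈ Finset.univ) =>
      sc (fun z x => -(q (x,y,z) * Real.log (qYZ y z)))]
    rw [sc (fun y x => ∑ z, -(q (x,y,z) * Real.log (qYZ y z)))]
    rw [← Finset.sum_neg_distrib]
    refine Finset.sum_congr rfl fun x _ => ?_
    rw [← Finset.sum_neg_distrib]
    refine Finset.sum_congr rfl fun y _ => ?_
    rw [← Finset.sum_neg_distrib]
  have key : ∀ x y z, q (x,y,z) - qXZ x z * qYZ y z / qZ z ≤
      q (x,y,z) * Real.log (q (x,y,z)) + q (x,y,z) * Real.log (qZ z)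
        - q (x,y,z) * Real.log (qXZ x z) - q (x,y,z) * Real.log (qYZ y z) := by
    intro x y z
    rcases eq_or_lt_of_le (hq (x,y,z)) with h0 | hpos
    · rw [← h0]
      have : 0 ≤ qXZ x z * qYZ y z / qZ z :=
        div_nonneg (mul_nonneg (hqXZ0 x z) (hqYZ0 y z)) (hqZ0 z)
      simp only [zero_mul]
      linarith
    · have hXZ : 0 < qXZ x z := lt_of_lt_of_le hpos (by
        rw [hqXZ]
        exact Finset.single_le_sum (f := fun y' => q (x, y', z))
          (fun i _ => hq _) (Finset.mem_univ y))
      have hYZ : 0 < qYZ y z := lt_of_lt_of_le hpos (by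
        rw [hqYZ]
        exact Finset.single_le_sum (f := fun x' => q (x', y, z))
          (fun i _ => hq _) (Finset.mem_univ x))
      have hZ : 0 < qZ z := lt_of_lt_of_le hXZ (by
        rw [hqZ, hqXZ]
        exact Finset.single_le_sum (f := fun x' => ∑ y', q (x', y', z))
          (fun i _ => Finset.sum_nonneg fun _ _ => hq _) (Finset.mem_univ x))
      have hu : 0 < qXZ x z * qYZ y z / (q (x,y,z) * qZ z) :=
        div_pos (mul_pos hXZ hYZ) (mul_pos hpos hZ)
      have hlog := Real.log_le_sub_one_of_pos hu
      have hL : Real.log (qXZ x z * qYZ y z / (q (x,y,z) * qZ z))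
          = Real.log (qXZ x z) + Real.log (qYZ y z)
            - Real.log (q (x,y,z)) - Real.log (qZ z) := by
        rw [Real.log_div (by positivity) (by positivity),
          Real.log_mul hXZ.ne' hYZ.ne', Real.log_mul hpos.ne' hZ.ne']
        ring
      have h5 : q (x,y,z) * (qXZ x z * qYZ y z / (q (x,y,z) * qZ z))
          = qXZ x z * qYZ y z / qZ z := by
        field_simp
      have h6 := mul_le_mul_of_nonneg_left hlog hpos.le
      have h7 : q (x,y,z) * (qXZ x z * qYZ y z / (q (x,y,z) * qZ z) - 1)
          = qXZ x z * qYZ y z / qZ z - q (x,y,z) := by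
        rw [mul_sub, h5, mul_one]
      rw [hL, h7] at h6
      have h8 : q (x,y,z) * (Real.log (qXZ x z) + Real.log (qYZ y z)
            - Real.log (q (x,y,z)) - Real.log (qZ z))
          = q (x,y,z) * Real.log (qXZ x z) + q (x,y,z) * Real.log (qYZ y z)
            - q (x,y,z) * Real.log (q (x,y,z)) - q (x,y,z) * Real.log (qZ z) := by
        ring
      rw [h8] at h6
      linarith
  have hsum : ∑ x, ∑ y, ∑ z, (q (x,y,z) - qXZ x z * qYZ y z / qZ z)
      ≤ ∑ x, ∑ y, ∑ z, (q (x,y,z) * Real.log (q (x,y,z)) + q (x,y,z) * Real.log (qZ z)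
        - q (x,y,z) * Real.log (qXZ x z) - q (x,y,z) * Real.log (qYZ y z)) := by
    refine Finset.sum_le_sum fun x _ => Finset.sum_le_sum fun y _ =>
      Finset.sum_le_sum fun z _ => key x y z
  have hzero : ∑ x, ∑ y, ∑ z, (q (x,y,z) - qXZ x z * qYZ y z / qZ z) = 0 := by
    have hA : ∑ x, ∑ y, ∑ z, q (x,y,z) = ∑ z, qZ z := by
      rw [Finset.sum_congr rfl fun x (_ : x ∈ Finset.univ) =>
        sc (fun y z => q (x,y,z))]
      rw [sc (fun x z => ∑ y, q (x,y,z))]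
    have hB : ∑ x, ∑ y, ∑ z, qXZ x z * qYZ y z / qZ z = ∑ z, qZ z := by
      rw [Finset.sum_congr rfl fun x (_ : x ∈ Finset.univ) =>
        sc (fun y z => qXZ x z * qYZ y z / qZ z)]
      rw [sc (fun x z => ∑ y, qXZ x z * qYZ y z / qZ z)]
      refine Finset.sum_congr rfl fun z _ => ?_
      have hy : ∀ x, ∑ y, qXZ x z * qYZ y z / qZ z = qXZ x z * qZ z / qZ z := by
        intro x
        rw [← Finset.sum_div, ← Finset.mul_sum]
        congr 1
        congr 1
        rw [hqZ, hqYZ]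
        exact sc (fun y x => q (x,y,z))
      rw [Finset.sum_congr rfl fun x _ => hy x]
      rw [← Finset.sum_div, ← Finset.sum_mul]
      have hx : ∑ x, qXZ x z = qZ z := by
        simp only [hqZ, hqXZ]
      rw [hx]
      by_cases hz0 : qZ z = 0
      · rw [hz0]; simp
      · rw [mul_div_assoc, div_self hz0, mul_one]
    simp only [Finset.sum_sub_distrib]
    rw [hA, hB, sub_self]
  have hsplit : ∑ x, ∑ y, ∑ z, (q (x,y,z) * Real.log (q (x,y,z)) + q (x,y,z) * Real.log (qZ z)
        - q (x,y,z) * Real.log (qXZ x z) - q (x,y,z) * Real.log (qYZ y z))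
      = (∑ x, ∑ y, ∑ z, q (x,y,z) * Real.log (q (x,y,z)))
        + (∑ x, ∑ y, ∑ z, q (x,y,z) * Real.log (qZ z))
        - (∑ x, ∑ y, ∑ z, q (x,y,z) * Real.log (qXZ x z))
        - (∑ x, ∑ y, ∑ z, q (x,y,z) * Real.log (qYZ y z)) := by
    simp only [Finset.sum_add_distrib, Finset.sum_sub_distrib]
  rw [E1, E2, E3, E4]
  linarith [hsum, hzero, hsplit]


lemma prob_nonneg (p : Ω → ℝ) (hp : ∀ ω, 0 ≤ p ω) (X : Ω → α) (a : α) :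
    0 ≤ prob p X a := by
  classical
  unfold prob
  exact Finset.sum_nonneg fun ω _ => by split <;> simp [hp ω]

lemma sum_prob [Fintype α] (p : Ω → ℝ) (X : Ω → α) :
    ∑ a, prob p X a = ∑ ω, p ω := by
  classical
  unfold prob
  rw [Finset.sum_comm]
  exact Finset.sum_congr rfl fun ω _ => by simp

lemma prob_comp [Fintype α] (p : Ω → ℝ) (T : Ω → α) (f : α → β) (c : β) :
    prob (prob p T) f c = prob p (fun ω => f (T ω)) c := by
  classical
  unfold prob
  have h1 : ∀ a : α, (if f a = c then ∑ ω, (if T ω = a then p ω else 0) else 0)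
      = ∑ ω, (if T ω = a then (if f a = c then p ω else 0) else 0) := by
    intro a
    split_ifs with h <;> simp [h]
  rw [Finset.sum_congr rfl (fun a _ => h1 a), Finset.sum_comm]
  apply Finset.sum_congr rfl
  intro ω _
  rw [Finset.sum_ite_eq Finset.univ (T ω) (fun a => if f a = c then p ω else 0)]
  simp

lemma ent_map [Fintype α] [Fintype β] (p : Ω → ℝ) (T : Ω → α) (f : α → β) :
    ent (prob p T) f = ent p (fun ω => f (T ω)) := by
  unfold ent
  exact Finset.sum_congr rfl fun b _ => by rw [prob_comp]

lemma prob_fst [Fintype β] (p : Ω → ℝ) (X : Ω → α) (Y : Ω → β) (a : α) :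
    prob p X a = ∑ b, prob p (fun ω => (X ω, Y ω)) (a, b) := by
  classical
  unfold prob
  rw [Finset.sum_comm]
  apply Finset.sum_congr rfl
  intro ω _
  simp only [Prod.mk.injEq]
  rw [Finset.sum_congr rfl (fun b _ => ite_and (X ω = a) (Y ω = b) (p ω) 0)]
  rw [show ∀ P : Prop, ∀ _ : Decidable P, (∑ b : β, if P then (if Y ω = b then p ω else 0) else 0)
      = if P then (∑ b : β, if Y ω = b then p ω else 0) else 0 from
    fun P _ => by split_ifs <;> simp]
  rw [Finset.sum_ite_eq Finset.univ (Y ω) (fun _ => p ω)]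
  simp

lemma prob_snd [Fintype α] (p : Ω → ℝ) (X : Ω → α) (Y : Ω → β) (b : β) :
    prob p Y b = ∑ a, prob p (fun ω => (X ω, Y ω)) (a, b) := by
  classical
  unfold prob
  rw [Finset.sum_comm]
  apply Finset.sum_congr rfl
  intro ω _
  simp only [Prod.mk.injEq]
  rw [Finset.sum_congr rfl (fun a _ => ite_and (X ω = a) (Y ω = b) (p ω) 0)]
  rw [Finset.sum_ite_eq Finset.univ (X ω) (fun _ => if Y ω = b then p ω else 0)]
  simp

lemma cmi_nonneg [Fintype α] [Fintype β] [Fintype γ] (p : Ω → ℝ) (hp : ∀ ω, 0 ≤ p ω)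
    (X : Ω → α) (Y : Ω → β) (Z : Ω → γ) : 0 ≤ cmi p X Y Z := by
  classical
  have hq : ∀ t, 0 ≤ prob p (fun ω => (X ω, Y ω, Z ω)) t :=
    fun t => prob_nonneg p hp _ t
  have h := submod (prob p (fun ω => (X ω, Y ω, Z ω))) hq
  have e1 : ent (prob p (fun ω => (X ω, Y ω, Z ω))) (fun t => (t.1, t.2.2))
      = ent p (fun ω => (X ω, Z ω)) := ent_map p _ _
  have e2 : ent (prob p (fun ω => (X ω, Y ω, Z ω))) (fun t => (t.2.1, t.2.2))
      = ent p (fun ω => (Y ω, Z ω)) := ent_map p _ _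
  have e3 : ent (prob p (fun ω => (X ω, Y ω, Z ω))) (fun t => ((t.1, t.2.1), t.2.2))
      = ent p (fun ω => ((X ω, Y ω), Z ω)) := ent_map p _ _
  have e4 : ent (prob p (fun ω => (X ω, Y ω, Z ω))) (fun t => t.2.2)
      = ent p Z := ent_map p _ _
  rw [e1, e2, e3, e4] at h
  unfold cmi
  linarith

lemma ent_congr [Fintype α] [Fintype β] (p : Ω → ℝ) {X : Ω → α} {Y : Ω → β}
    (f : α → β) (g : β → α) (hf : ∀ ω, Y ω = f (X ω)) (hg : ∀ ω, X ω = g (Y ω)) :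
    ent p X = ent p Y := by
  classical
  have hprob : ∀ b, prob p Y b = if f (g b) = b then prob p X (g b) else 0 := by
    intro b
    split
    · next hb =>
      unfold prob
      refine Finset.sum_congr rfl fun ω _ => ?_
      congr 1
      simp only [eq_iff_iff]
      constructor
      · intro h; rw [hg ω, h]
      · intro h; rw [hf ω, h, hb]
    · next hb =>
      unfold prob
      apply Finset.sum_eq_zero
      intro ω _
      rw [if_neg]
      intro h
      exact hb (by rw [← h, ← hg ω, ← hf ω, h])
  unfold ent
  have hX0 : ∀ a, g (f a) ≠ a → prob p X a = 0 := by
    intro a ha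
    unfold prob
    apply Finset.sum_eq_zero
    intro ω _
    rw [if_neg]
    intro h
    exact ha (by rw [← h, ← hf ω, ← hg ω, h])
  rw [← Finset.sum_filter_add_sum_filter_not Finset.univ (fun a => g (f a) = a)
      (fun a => Real.negMulLog (prob p X a)),
    ← Finset.sum_filter_add_sum_filter_not Finset.univ (fun b => f (g b) = b)
      (fun b => Real.negMulLog (prob p Y b))]
  have h2 : ∑ a ∈ Finset.univ.filter (fun a => ¬ g (f a) = a),
      Real.negMulLog (prob p X a) = 0 := by
    apply Finset.sum_eq_zero
    intro a ha
    rw [hX0 a (Finset.mem_filter.mp ha).2]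
    simp [Real.negMulLog]
  have h2' : ∑ b ∈ Finset.univ.filter (fun b => ¬ f (g b) = b),
      Real.negMulLog (prob p Y b) = 0 := by
    apply Finset.sum_eq_zero
    intro b hb
    rw [hprob b, if_neg (Finset.mem_filter.mp hb).2]
    simp [Real.negMulLog]
  rw [h2, h2', add_zero, add_zero]
  apply Finset.sum_nbij' (i := fun a => f a) (j := fun b => g b)
  · intro a ha
    simp only [Finset.mem_filter, Finset.mem_univ, true_and] at ha ⊢
    rw [ha]
  · intro b hb
    simp only [Finset.mem_filter, Finset.mem_univ, true_and] at hb ⊢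
    rw [hb]
  · intro a ha
    exact (Finset.mem_filter.mp ha).2
  · intro b hb
    exact (Finset.mem_filter.mp hb).2
  · intro a ha
    rw [hprob (f a)]
    have h3 : g (f a) = a := (Finset.mem_filter.mp ha).2
    rw [h3, if_pos rfl]

lemma cmi_map (p : Ω → ℝ) (T : Ω → δ) [Fintype δ] {α' β' γ' : Type*}
    [Fintype α'] [Fintype β'] [Fintype γ']
    (X : δ → α') (Y : δ → β') (Z : δ → γ') :
    cmi (prob p T) X Y Z
      = cmi p (fun ω => X (T ω)) (fun ω => Y (T ω)) (fun ω => Z (T ω)) := by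
  unfold cmi
  rw [show ent (prob p T) (fun t => (X t, Z t)) = ent p (fun ω => (X (T ω), Z (T ω))) from
      ent_map p T _,
    show ent (prob p T) (fun t => (Y t, Z t)) = ent p (fun ω => (Y (T ω), Z (T ω))) from
      ent_map p T _,
    show ent (prob p T) (fun t => ((X t, Y t), Z t))
        = ent p (fun ω => ((X (T ω), Y (T ω)), Z (T ω))) from ent_map p T _,
    show ent (prob p T) Z = ent p (fun ω => Z (T ω)) from ent_map p T _]

lemma cmi_congr {α' β' γ' : Type*} [Fintype α'] [Fintype β'] [Fintype γ']
    (p : Ω → ℝ) {X : Ω → α} {X' : Ω → α'} {Y : Ω → β} {Y' : Ω → β'}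
    {Z : Ω → γ} {Z' : Ω → γ'}
    (fX : α → α') (gX : α' → α) (hfX : ∀ ω, X' ω = fX (X ω)) (hgX : ∀ ω, X ω = gX (X' ω))
    (fY : β → β') (gY : β' → β) (hfY : ∀ ω, Y' ω = fY (Y ω)) (hgY : ∀ ω, Y ω = gY (Y' ω))
    (fZ : γ → γ') (gZ : γ' → γ) (hfZ : ∀ ω, Z' ω = fZ (Z ω)) (hgZ : ∀ ω, Z ω = gZ (Z' ω)) :
    cmi p X Y Z = cmi p X' Y' Z' := by
  unfold cmi
  rw [ent_congr p (fun t => (fX t.1, fZ t.2)) (fun t => (gX t.1, gZ t.2))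
      (fun ω => by simp only [hfX ω, hfZ ω]) (fun ω => by simp only [hgX ω, hgZ ω]) (X := fun ω => (X ω, Z ω))
      (Y := fun ω => (X' ω, Z' ω)),
    ent_congr p (fun t => (fY t.1, fZ t.2)) (fun t => (gY t.1, gZ t.2))
      (fun ω => by simp only [hfY ω, hfZ ω]) (fun ω => by simp only [hgY ω, hgZ ω]) (X := fun ω => (Y ω, Z ω))
      (Y := fun ω => (Y' ω, Z' ω)),
    ent_congr p (fun t => ((fX t.1.1, fY t.1.2), fZ t.2)) (fun t => ((gX t.1.1, gY t.1.2), gZ t.2))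
      (fun ω => by simp only [hfX ω, hfY ω, hfZ ω]) (fun ω => by simp only [hgX ω, hgY ω, hgZ ω])
      (X := fun ω => ((X ω, Y ω), Z ω)) (Y := fun ω => ((X' ω, Y' ω), Z' ω)),
    ent_congr p fZ gZ hfZ hgZ]

lemma ent_pair_of_indep (p : Ω → ℝ) (hp1 : ∑ ω, p ω = 1) (X : Ω → α) (Y : Ω → β)
    (h : ∀ a b, prob p (fun ω => (X ω, Y ω)) (a, b) = prob p X a * prob p Y b) :
    ent p (fun ω => (X ω, Y ω)) = ent p X + ent p Y := by
  classical
  have hX1 : ∑ a, prob p X a = 1 := by rw [sum_prob]; exact hp1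
  have hY1 : ∑ b, prob p Y b = 1 := by rw [sum_prob]; exact hp1
  unfold ent
  rw [Fintype.sum_prod_type]
  calc ∑ a, ∑ b, Real.negMulLog (prob p (fun ω => (X ω, Y ω)) (a, b))
      = ∑ a, ∑ b, (prob p Y b * Real.negMulLog (prob p X a)
          + prob p X a * Real.negMulLog (prob p Y b)) := by
        refine Finset.sum_congr rfl fun a _ => Finset.sum_congr rfl fun b _ => ?_
        rw [h a b, Real.negMulLog_mul]
    _ = ∑ a, ((∑ b, prob p Y b) * Real.negMulLog (prob p X a)
          + prob p X a * ∑ b, Real.negMulLog (prob p Y b)) := by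
        refine Finset.sum_congr rfl fun a _ => ?_
        rw [Finset.sum_add_distrib, ← Finset.sum_mul, ← Finset.mul_sum]
    _ = (∑ a, Real.negMulLog (prob p X a)) + (∑ b, Real.negMulLog (prob p Y b)) := by
        rw [hY1, Finset.sum_add_distrib]
        simp only [one_mul]
        rw [← Finset.sum_mul, hX1, one_mul]

lemma prob_prod (ν₀ : Ω → ℝ) (ν₁ : Ω' → ℝ) (f₀ : Ω → α) (f₁ : Ω' → β) (a : α) (b : β) :
    prob (fun t : Ω × Ω' => ν₀ t.1 * ν₁ t.2) (fun t => (f₀ t.1, f₁ t.2)) (a, b)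
      = prob ν₀ f₀ a * prob ν₁ f₁ b := by
  classical
  unfold prob
  rw [Fintype.sum_prod_type, Finset.sum_mul_sum]
  refine Finset.sum_congr rfl fun ω _ => Finset.sum_congr rfl fun ω' _ => ?_
  by_cases h1 : f₀ ω = a <;> by_cases h2 : f₁ ω' = b <;> simp [h1, h2]

lemma ent_prod (ν₀ : Ω → ℝ) (ν₁ : Ω' → ℝ) (h₀ : IsPMF ν₀) (h₁ : IsPMF ν₁)
    (f₀ : Ω → α) (f₁ : Ω' → β) :
    ent (fun t : Ω × Ω' => ν₀ t.1 * ν₁ t.2) (fun t => (f₀ t.1, f₁ t.2))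
      = ent ν₀ f₀ + ent ν₁ f₁ := by
  classical
  have hpair : ∀ a b, prob (fun t : Ω × Ω' => ν₀ t.1 * ν₁ t.2) (fun t => (f₀ t.1, f₁ t.2)) (a, b)
      = prob ν₀ f₀ a * prob ν₁ f₁ b := fun a b => prob_prod ν₀ ν₁ f₀ f₁ a b
  have hsum1 : ∑ t : Ω × Ω', ν₀ t.1 * ν₁ t.2 = 1 := by
    rw [Fintype.sum_prod_type]
    rw [show (∑ a : Ω, ∑ b : Ω', ν₀ a * ν₁ b) = (∑ a : Ω, ν₀ a) * (∑ b : Ω', ν₁ b) from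
      (Finset.sum_mul_sum Finset.univ Finset.univ ν₀ ν₁).symm]
    rw [h₀.2, h₁.2, one_mul]
  have hX : ∀ a, prob (fun t : Ω × Ω' => ν₀ t.1 * ν₁ t.2) (fun t => f₀ t.1) a
      = prob ν₀ f₀ a := by
    intro a
    rw [prob_fst (fun t : Ω × Ω' => ν₀ t.1 * ν₁ t.2) (fun t => f₀ t.1) (fun t => f₁ t.2) a]
    rw [Finset.sum_congr rfl fun b _ => hpair a b, ← Finset.mul_sum, sum_prob, h₁.2, mul_one]
  have hY : ∀ b, prob (fun t : Ω × Ω' => ν₀ t.1 * ν₁ t.2) (fun t => f₁ t.2) b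
      = prob ν₁ f₁ b := by
    intro b
    rw [prob_snd (fun t : Ω × Ω' => ν₀ t.1 * ν₁ t.2) (fun t => f₀ t.1) (fun t => f₁ t.2) b]
    rw [Finset.sum_congr rfl fun a _ => hpair a b, ← Finset.sum_mul, sum_prob, h₀.2, one_mul]
  have hind : ∀ a b, prob (fun t : Ω × Ω' => ν₀ t.1 * ν₁ t.2) (fun t => (f₀ t.1, f₁ t.2)) (a, b)
      = prob (fun t : Ω × Ω' => ν₀ t.1 * ν₁ t.2) (fun t => f₀ t.1) a
        * prob (fun t : Ω × Ω' => ν₀ t.1 * ν₁ t.2) (fun t => f₁ t.2) b := by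
    intro a b
    rw [hpair a b, hX, hY]
  have h := ent_pair_of_indep (fun t : Ω × Ω' => ν₀ t.1 * ν₁ t.2) hsum1
    (fun t => f₀ t.1) (fun t => f₁ t.2) hind
  rw [h]
  congr 1
  · unfold ent
    exact Finset.sum_congr rfl fun a _ => by rw [hX]
  · unfold ent
    exact Finset.sum_congr rfl fun b _ => by rw [hY]

lemma cmi_prod {α' β' γ' : Type*} [Fintype α'] [Fintype β'] [Fintype γ']
    (ν₀ : Ω → ℝ) (ν₁ : Ω' → ℝ) (h₀ : IsPMF ν₀) (h₁ : IsPMF ν₁)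
    (U₀ : Ω → α) (V₀ : Ω → β) (W₀ : Ω → γ)
    (U₁ : Ω' → α') (V₁ : Ω' → β') (W₁ : Ω' → γ') :
    cmi (fun t : Ω × Ω' => ν₀ t.1 * ν₁ t.2)
        (fun t => (U₀ t.1, U₁ t.2)) (fun t => (V₀ t.1, V₁ t.2)) (fun t => (W₀ t.1, W₁ t.2))
      = cmi ν₀ U₀ V₀ W₀ + cmi ν₁ U₁ V₁ W₁ := by
  classical
  have r1 : ent (fun t : Ω × Ω' => ν₀ t.1 * ν₁ t.2)
        (fun t => ((U₀ t.1, U₁ t.2), (W₀ t.1, W₁ t.2)))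
      = ent (fun t : Ω × Ω' => ν₀ t.1 * ν₁ t.2)
        (fun t => ((U₀ t.1, W₀ t.1), (U₁ t.2, W₁ t.2))) :=
    ent_congr _ (fun s : (α × α') × (γ × γ') => ((s.1.1, s.2.1), (s.1.2, s.2.2)))
      (fun s : (α × γ) × (α' × γ') => ((s.1.1, s.2.1), (s.1.2, s.2.2)))
      (fun _ => rfl) (fun _ => rfl)
  have e1 := r1.trans (ent_prod ν₀ ν₁ h₀ h₁ (fun ω => (U₀ ω, W₀ ω)) (fun ω => (U₁ ω, W₁ ω)))
  have r2 : ent (fun t : Ω × Ω' => ν₀ t.1 * ν₁ t.2)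
        (fun t => ((V₀ t.1, V₁ t.2), (W₀ t.1, W₁ t.2)))
      = ent (fun t : Ω × Ω' => ν₀ t.1 * ν₁ t.2)
        (fun t => ((V₀ t.1, W₀ t.1), (V₁ t.2, W₁ t.2))) :=
    ent_congr _ (fun s : (β × β') × (γ × γ') => ((s.1.1, s.2.1), (s.1.2, s.2.2)))
      (fun s : (β × γ) × (β' × γ') => ((s.1.1, s.2.1), (s.1.2, s.2.2)))
      (fun _ => rfl) (fun _ => rfl)
  have e2 := r2.trans (ent_prod ν₀ ν₁ h₀ h₁ (fun ω => (V₀ ω, W₀ ω)) (fun ω => (V₁ ω, W₁ ω)))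
  have r3 : ent (fun t : Ω × Ω' => ν₀ t.1 * ν₁ t.2)
        (fun t => (((U₀ t.1, U₁ t.2), (V₀ t.1, V₁ t.2)), (W₀ t.1, W₁ t.2)))
      = ent (fun t : Ω × Ω' => ν₀ t.1 * ν₁ t.2)
        (fun t => (((U₀ t.1, V₀ t.1), W₀ t.1), ((U₁ t.2, V₁ t.2), W₁ t.2))) :=
    ent_congr _
      (fun s : ((α × α') × (β × β')) × (γ × γ') =>
        (((s.1.1.1, s.1.2.1), s.2.1), ((s.1.1.2, s.1.2.2), s.2.2)))
      (fun s : ((α × β) × γ) × ((α' × β') × γ') =>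
        (((s.1.1.1, s.2.1.1), (s.1.1.2, s.2.1.2)), (s.1.2, s.2.2)))
      (fun _ => rfl) (fun _ => rfl)
  have e3 := r3.trans (ent_prod ν₀ ν₁ h₀ h₁
    (fun ω => ((U₀ ω, V₀ ω), W₀ ω)) (fun ω => ((U₁ ω, V₁ ω), W₁ ω)))
  have e4 := ent_prod ν₀ ν₁ h₀ h₁ W₀ W₁
  unfold cmi
  rw [e1, e2, e3, e4]
  ring

lemma prob_equiv (E : Ω ≃ Ω') (q : Ω' → ℝ) (X : Ω' → α) (a : α) :
    prob (fun ω => q (E ω)) (fun ω => X (E ω)) a = prob q X a := by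
  classical
  unfold prob
  exact Equiv.sum_comp E (fun ω' => if X ω' = a then q ω' else 0)

lemma ent_equiv (E : Ω ≃ Ω') (q : Ω' → ℝ) (X : Ω' → α) :
    ent (fun ω => q (E ω)) (fun ω => X (E ω)) = ent q X := by
  unfold ent
  exact Finset.sum_congr rfl fun a _ => by rw [prob_equiv E q X a]

lemma cmi_equiv (E : Ω ≃ Ω') (q : Ω' → ℝ) (X : Ω' → α) (Y : Ω' → β) (Z : Ω' → γ) :
    cmi (fun ω => q (E ω)) (fun ω => X (E ω)) (fun ω => Y (E ω)) (fun ω => Z (E ω))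
      = cmi q X Y Z := by
  unfold cmi
  rw [show (ent (fun ω => q (E ω)) fun ω => (X (E ω), Z (E ω)))
      = ent q (fun ω => (X ω, Z ω)) from ent_equiv E q (fun ω => (X ω, Z ω)),
    show (ent (fun ω => q (E ω)) fun ω => (Y (E ω), Z (E ω)))
      = ent q (fun ω => (Y ω, Z ω)) from ent_equiv E q (fun ω => (Y ω, Z ω)),
    show (ent (fun ω => q (E ω)) fun ω => ((X (E ω), Y (E ω)), Z (E ω)))
      = ent q (fun ω => ((X ω, Y ω), Z ω)) from ent_equiv E q (fun ω => ((X ω, Y ω), Z ω)),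
    ent_equiv E q Z]


lemma indep_comp {α' β' : Type*} [Fintype α'] [Fintype β'] (p : Ω → ℝ) (U : Ω → α) (W : Ω → β)
    (h : ∀ u w, prob p (fun ω => (U ω, W ω)) (u, w) = prob p U u * prob p W w)
    (f : α → α') (g : β → β') (c : α') (d : β') :
    prob p (fun ω => (f (U ω), g (W ω))) (c, d)
      = prob p (fun ω => f (U ω)) c * prob p (fun ω => g (W ω)) d := by
  classical
  have h1 : prob p (fun ω => (f (U ω), g (W ω))) (c, d)
      = prob (prob p (fun ω => (U ω, W ω))) (fun t => (f t.1, g t.2)) (c, d) :=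
    (prob_comp p (fun ω => (U ω, W ω)) (fun t => (f t.1, g t.2)) (c, d)).symm
  have h2 : prob (prob p (fun ω => (U ω, W ω))) (fun t => (f t.1, g t.2)) (c, d)
      = prob (fun t : α × β => prob p U t.1 * prob p W t.2) (fun t => (f t.1, g t.2)) (c, d) := by
    unfold prob
    refine Finset.sum_congr rfl fun t _ => ?_
    split_ifs with ht
    · exact h t.1 t.2
    · rfl
  rw [h1, h2, prob_prod (prob p U) (prob p W) f g c d, prob_comp, prob_comp]

end Infra

section Keys

variable {Ω 𝒜₀ 𝒜₁ ℬ₀ ℬ₁ 𝒬 : Type*} [Fintype Ω] [Fintype 𝒜₀] [Fintype 𝒜₁]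
  [Fintype ℬ₀] [Fintype ℬ₁] [Fintype 𝒬]

/-- I(A₀;B₀|Q,A₁,B₁) + I(A₁;B₁|Q) ≤ I(A₀A₁;B₀B₁|Q). -/
lemma key3 (p : Ω → ℝ) (hp : IsPMF p) (A₀ : Ω → 𝒜₀) (A₁ : Ω → 𝒜₁)
    (B₀ : Ω → ℬ₀) (B₁ : Ω → ℬ₁) (Q : Ω → 𝒬) :
    cmi p A₀ B₀ (fun ω => (Q ω, A₁ ω, B₁ ω)) + cmi p A₁ B₁ Q
      ≤ cmi p (fun ω => (A₀ ω, A₁ ω)) (fun ω => (B₀ ω, B₁ ω)) Q := by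
  classical
  -- recodings to canonical form
  have cA : ent p (fun ω => (A₀ ω, (Q ω, A₁ ω, B₁ ω)))
      = ent p (fun ω => (Q ω, A₀ ω, A₁ ω, B₁ ω)) :=
    ent_congr p (fun s => (s.2.1, s.1, s.2.2.1, s.2.2.2))
      (fun t => (t.2.1, (t.1, t.2.2.1, t.2.2.2))) (fun _ => rfl) (fun _ => rfl)
  have cB : ent p (fun ω => (B₀ ω, (Q ω, A₁ ω, B₁ ω)))
      = ent p (fun ω => (Q ω, A₁ ω, B₀ ω, B₁ ω)) :=
    ent_congr p (fun s => (s.2.1, s.2.2.1, s.1, s.2.2.2))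
      (fun t => (t.2.2.1, (t.1, t.2.1, t.2.2.2))) (fun _ => rfl) (fun _ => rfl)
  have cC : ent p (fun ω => ((A₀ ω, B₀ ω), (Q ω, A₁ ω, B₁ ω)))
      = ent p (fun ω => (Q ω, A₀ ω, A₁ ω, B₀ ω, B₁ ω)) :=
    ent_congr p (fun s => (s.2.1, s.1.1, s.2.2.1, s.1.2, s.2.2.2))
      (fun t => ((t.2.1, t.2.2.2.1), (t.1, t.2.2.1, t.2.2.2.2))) (fun _ => rfl) (fun _ => rfl)
  have cD : ent p (fun ω => (A₁ ω, Q ω)) = ent p (fun ω => (Q ω, A₁ ω)) :=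
    ent_congr p (fun s => (s.2, s.1)) (fun t => (t.2, t.1)) (fun _ => rfl) (fun _ => rfl)
  have cE : ent p (fun ω => (B₁ ω, Q ω)) = ent p (fun ω => (Q ω, B₁ ω)) :=
    ent_congr p (fun s => (s.2, s.1)) (fun t => (t.2, t.1)) (fun _ => rfl) (fun _ => rfl)
  have cF : ent p (fun ω => ((A₁ ω, B₁ ω), Q ω)) = ent p (fun ω => (Q ω, A₁ ω, B₁ ω)) :=
    ent_congr p (fun s => (s.2, s.1.1, s.1.2)) (fun t => ((t.2.1, t.2.2), t.1))
      (fun _ => rfl) (fun _ => rfl)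
  have cG : ent p (fun ω => ((A₀ ω, A₁ ω), Q ω)) = ent p (fun ω => (Q ω, A₀ ω, A₁ ω)) :=
    ent_congr p (fun s => (s.2, s.1.1, s.1.2)) (fun t => ((t.2.1, t.2.2), t.1))
      (fun _ => rfl) (fun _ => rfl)
  have cH : ent p (fun ω => ((B₀ ω, B₁ ω), Q ω)) = ent p (fun ω => (Q ω, B₀ ω, B₁ ω)) :=
    ent_congr p (fun s => (s.2, s.1.1, s.1.2)) (fun t => ((t.2.1, t.2.2), t.1))
      (fun _ => rfl) (fun _ => rfl)
  have cI : ent p (fun ω => (((A₀ ω, A₁ ω), (B₀ ω, B₁ ω)), Q ω))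
      = ent p (fun ω => (Q ω, A₀ ω, A₁ ω, B₀ ω, B₁ ω)) :=
    ent_congr p (fun s => (s.2, s.1.1.1, s.1.1.2, s.1.2.1, s.1.2.2))
      (fun t => (((t.2.1, t.2.2.1), (t.2.2.2.1, t.2.2.2.2)), t.1)) (fun _ => rfl) (fun _ => rfl)
  -- nonneg CMI instances
  have n1 := cmi_nonneg p hp.1 A₀ B₁ (fun ω => (Q ω, A₁ ω))
  have n2 := cmi_nonneg p hp.1 A₁ B₀ (fun ω => (Q ω, B₁ ω))
  unfold cmi at n1 n2 ⊢
  rw [show ent p (fun ω => (A₀ ω, (Q ω, A₁ ω))) = ent p (fun ω => (Q ω, A₀ ω, A₁ ω)) from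
      ent_congr p (fun s => (s.2.1, s.1, s.2.2)) (fun t => (t.2.1, (t.1, t.2.2)))
        (fun _ => rfl) (fun _ => rfl),
    show ent p (fun ω => (B₁ ω, (Q ω, A₁ ω))) = ent p (fun ω => (Q ω, A₁ ω, B₁ ω)) from
      ent_congr p (fun s => (s.2.1, s.2.2, s.1)) (fun t => (t.2.2, (t.1, t.2.1)))
        (fun _ => rfl) (fun _ => rfl),
    show ent p (fun ω => ((A₀ ω, B₁ ω), (Q ω, A₁ ω)))
        = ent p (fun ω => (Q ω, A₀ ω, A₁ ω, B₁ ω)) from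
      ent_congr p (fun s => (s.2.1, s.1.1, s.2.2, s.1.2))
        (fun t => ((t.2.1, t.2.2.2), (t.1, t.2.2.1))) (fun _ => rfl) (fun _ => rfl)] at n1
  rw [show ent p (fun ω => (A₁ ω, (Q ω, B₁ ω))) = ent p (fun ω => (Q ω, A₁ ω, B₁ ω)) from
      ent_congr p (fun s => (s.2.1, s.1, s.2.2)) (fun t => (t.2.1, (t.1, t.2.2)))
        (fun _ => rfl) (fun _ => rfl),
    show ent p (fun ω => (B₀ ω, (Q ω, B₁ ω))) = ent p (fun ω => (Q ω, B₀ ω, B₁ ω)) from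
      ent_congr p (fun s => (s.2.1, s.1, s.2.2)) (fun t => (t.2.1, (t.1, t.2.2)))
        (fun _ => rfl) (fun _ => rfl),
    show ent p (fun ω => ((A₁ ω, B₀ ω), (Q ω, B₁ ω)))
        = ent p (fun ω => (Q ω, A₁ ω, B₀ ω, B₁ ω)) from
      ent_congr p (fun s => (s.2.1, s.1.1, s.1.2, s.2.2))
        (fun t => ((t.2.1, t.2.2.1), (t.1, t.2.2.2))) (fun _ => rfl) (fun _ => rfl)] at n2
  rw [cA, cB, cC, cD, cE, cF, cG, cH, cI]
  linarith

/-- I(Q,A₁,B₁ ; B₀ | A₀) + I(Q;B₁|A₁) ≤ I(Q ; B₀B₁ | A₀A₁) under independence of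
the pairs (A₀,B₀) and (A₁,B₁). -/
lemma key1 (p : Ω → ℝ) (hp : IsPMF p) (A₀ : Ω → 𝒜₀) (A₁ : Ω → 𝒜₁)
    (B₀ : Ω → ℬ₀) (B₁ : Ω → ℬ₁) (Q : Ω → 𝒬)
    (hind : ∀ u w, prob p (fun ω => ((A₀ ω, B₀ ω), (A₁ ω, B₁ ω))) (u, w)
      = prob p (fun ω => (A₀ ω, B₀ ω)) u * prob p (fun ω => (A₁ ω, B₁ ω)) w) :
    cmi p (fun ω => (Q ω, A₁ ω, B₁ ω)) B₀ A₀ + cmi p Q B₁ A₁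
      ≤ cmi p Q (fun ω => (B₀ ω, B₁ ω)) (fun ω => (A₀ ω, A₁ ω)) := by
  classical
  -- independence entropy identities
  have I1 : ent p (fun ω => ((A₀ ω, B₀ ω), (A₁ ω, B₁ ω)))
      = ent p (fun ω => (A₀ ω, B₀ ω)) + ent p (fun ω => (A₁ ω, B₁ ω)) :=
    ent_pair_of_indep p hp.2 _ _ hind
  have I1' : ent p (fun ω => (A₀ ω, A₁ ω, B₀ ω, B₁ ω))
      = ent p (fun ω => (A₀ ω, B₀ ω)) + ent p (fun ω => (A₁ ω, B₁ ω)) := by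
    rw [← I1]
    exact ent_congr p (fun s => ((s.1, s.2.2.1), (s.2.1, s.2.2.2)))
      (fun t => (t.1.1, t.2.1, t.1.2, t.2.2)) (fun _ => rfl) (fun _ => rfl)
  have hindA := indep_comp p (fun ω => (A₀ ω, B₀ ω)) (fun ω => (A₁ ω, B₁ ω)) hind
    Prod.fst Prod.fst
  have I2 : ent p (fun ω => (A₀ ω, A₁ ω)) = ent p A₀ + ent p A₁ :=
    ent_pair_of_indep p hp.2 A₀ A₁ (fun u w => hindA u w)
  -- recodings
  have k1 : ent p (fun ω => ((Q ω, A₁ ω, B₁ ω), A₀ ω))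
      = ent p (fun ω => (Q ω, A₀ ω, A₁ ω, B₁ ω)) :=
    ent_congr p (fun s => (s.1.1, s.2, s.1.2.1, s.1.2.2))
      (fun t => ((t.1, t.2.2.1, t.2.2.2), t.2.1)) (fun _ => rfl) (fun _ => rfl)
  have k2 : ent p (fun ω => (((Q ω, A₁ ω, B₁ ω), B₀ ω), A₀ ω))
      = ent p (fun ω => (Q ω, A₀ ω, A₁ ω, B₀ ω, B₁ ω)) :=
    ent_congr p (fun s => (s.1.1.1, s.2, s.1.1.2.1, s.1.2, s.1.1.2.2))
      (fun t => (((t.1, (t.2.2.1, t.2.2.2.2)), t.2.2.2.1), t.2.1)) (fun _ => rfl) (fun _ => rfl)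
  have k3 : ent p (fun ω => (Q ω, A₁ ω)) = ent p (fun ω => (Q ω, A₁ ω)) := rfl
  have k4 : ent p (fun ω => (B₁ ω, A₁ ω)) = ent p (fun ω => (A₁ ω, B₁ ω)) :=
    ent_congr p (fun s => (s.2, s.1)) (fun t => (t.2, t.1)) (fun _ => rfl) (fun _ => rfl)
  have k5 : ent p (fun ω => ((Q ω, B₁ ω), A₁ ω)) = ent p (fun ω => (Q ω, A₁ ω, B₁ ω)) :=
    ent_congr p (fun s => (s.1.1, s.2, s.1.2)) (fun t => ((t.1, t.2.2), t.2.1))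
      (fun _ => rfl) (fun _ => rfl)
  have k7 : ent p (fun ω => ((B₀ ω, B₁ ω), (A₀ ω, A₁ ω)))
      = ent p (fun ω => (A₀ ω, A₁ ω, B₀ ω, B₁ ω)) :=
    ent_congr p (fun s => (s.2.1, s.2.2, s.1.1, s.1.2))
      (fun t => ((t.2.2.1, t.2.2.2), (t.1, t.2.1))) (fun _ => rfl) (fun _ => rfl)
  have k8 : ent p (fun ω => ((Q ω, (B₀ ω, B₁ ω)), (A₀ ω, A₁ ω)))
      = ent p (fun ω => (Q ω, A₀ ω, A₁ ω, B₀ ω, B₁ ω)) :=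
    ent_congr p (fun s => (s.1.1, s.2.1, s.2.2, s.1.2.1, s.1.2.2))
      (fun t => ((t.1, (t.2.2.2.1, t.2.2.2.2)), (t.2.1, t.2.2.1))) (fun _ => rfl) (fun _ => rfl)
  -- nonneg CMI instance
  have k0 : ent p (fun ω => (B₀ ω, A₀ ω)) = ent p (fun ω => (A₀ ω, B₀ ω)) :=
    ent_congr p (fun s => (s.2, s.1)) (fun t => (t.2, t.1)) (fun _ => rfl) (fun _ => rfl)
  have k9 : ent p (fun ω => (Q ω, (A₀ ω, A₁ ω))) = ent p (fun ω => (Q ω, A₀ ω, A₁ ω)) := rfl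
  have n1 := cmi_nonneg p hp.1 A₀ B₁ (fun ω => (Q ω, A₁ ω))
  unfold cmi at n1 ⊢
  beta_reduce
  rw [show ent p (fun ω => (A₀ ω, (Q ω, A₁ ω))) = ent p (fun ω => (Q ω, A₀ ω, A₁ ω)) from
      ent_congr p (fun s => (s.2.1, s.1, s.2.2)) (fun t => (t.2.1, (t.1, t.2.2)))
        (fun _ => rfl) (fun _ => rfl),
    show ent p (fun ω => (B₁ ω, (Q ω, A₁ ω))) = ent p (fun ω => (Q ω, A₁ ω, B₁ ω)) from
      ent_congr p (fun s => (s.2.1, s.2.2, s.1)) (fun t => (t.2.2, (t.1, t.2.1)))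
        (fun _ => rfl) (fun _ => rfl),
    show ent p (fun ω => ((A₀ ω, B₁ ω), (Q ω, A₁ ω)))
        = ent p (fun ω => (Q ω, A₀ ω, A₁ ω, B₁ ω)) from
      ent_congr p (fun s => (s.2.1, s.1.1, s.2.2, s.1.2))
        (fun t => ((t.2.1, t.2.2.2), (t.1, t.2.2.1))) (fun _ => rfl) (fun _ => rfl)] at n1
  rw [k0, k1, k2, k4, k5, k7, k8]
  linarith [I1', I2]

end Keys



/-- Splitting equivalence for the product construction. -/
def splitEquiv (𝒳₀ 𝒴₀ 𝒳₁ 𝒴₁ : Type*) (m₀ m₁ : ℕ) :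
    ((𝒳₀ × 𝒳₁) × (𝒴₀ × 𝒴₁) × Fin (m₀ * m₁))
      ≃ ((𝒳₀ × 𝒴₀ × Fin m₀) × (𝒳₁ × 𝒴₁ × Fin m₁)) where
  toFun ω := ((ω.1.1, ω.2.1.1, (finProdFinEquiv.symm ω.2.2).1),
              (ω.1.2, ω.2.1.2, (finProdFinEquiv.symm ω.2.2).2))
  invFun t := ((t.1.1, t.2.1), (t.1.2.1, t.2.2.1), finProdFinEquiv (t.1.2.2, t.2.2.2))
  left_inv ω := by
    obtain ⟨⟨x0, x1⟩, ⟨y0, y1⟩, q⟩ := ω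
    have h : finProdFinEquiv (finProdFinEquiv.symm q) = q := finProdFinEquiv.apply_symm_apply q
    simpa using h
  right_inv t := by
    obtain ⟨⟨x0, y0, q0⟩, ⟨x1, y1, q1⟩⟩ := t
    simp

open Pointwise in
theorem stmt15 {Ω 𝒳₀ 𝒴₀ 𝒳₁ 𝒴₁ : Type*} [Fintype Ω] [Fintype 𝒳₀] [Fintype 𝒴₀]
    [Fintype 𝒳₁] [Fintype 𝒴₁]
    (p : Ω → ℝ) (hp : IsPMF p)
    (X₀ : Ω → 𝒳₀) (Y₀ : Ω → 𝒴₀) (X₁ : Ω → 𝒳₁) (Y₁ : Ω → 𝒴₁)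
    (hindep : ∀ (a : 𝒳₀ × 𝒴₀) (b : 𝒳₁ × 𝒴₁),
      prob p (fun ω => ((X₀ ω, Y₀ ω), (X₁ ω, Y₁ ω))) (a, b)
        = prob p (fun ω => (X₀ ω, Y₀ ω)) a * prob p (fun ω => (X₁ ω, Y₁ ω)) b) :
    KRegion (fun ab => prob p (fun ω => ((X₀ ω, X₁ ω), (Y₀ ω, Y₁ ω))) ab)
      = KRegion (fun ab => prob p (fun ω => (X₀ ω, Y₀ ω)) ab)
        + KRegion (fun ab => prob p (fun ω => (X₁ ω, Y₁ ω)) ab) := by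
  classical
  ext v
  constructor
  · rintro ⟨m, ν, hν, hmarg, h1, h2, h3, hv1, hv21, hv22⟩
    have hpair : ∀ (u : 𝒳₀ × 𝒴₀) (w : 𝒳₁ × 𝒴₁),
        prob ν (fun ω => ((ω.1.1, ω.2.1.1), (ω.1.2, ω.2.1.2))) (u, w)
          = prob p (fun ω => (X₀ ω, Y₀ ω)) u * prob p (fun ω => (X₁ ω, Y₁ ω)) w := by
      rintro ⟨x₀, y₀⟩ ⟨x₁, y₁⟩
      have e1 : prob ν (fun ω => ((ω.1.1, ω.2.1.1), (ω.1.2, ω.2.1.2))) ((x₀, y₀), (x₁, y₁))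
          = prob ν (fun ω => (ω.1, ω.2.1)) ((x₀, x₁), (y₀, y₁)) :=
        prob_congr ν fun ω => by simp only [Prod.ext_iff]; tauto
      have e2 : prob p (fun ω => ((X₀ ω, X₁ ω), (Y₀ ω, Y₁ ω))) ((x₀, x₁), (y₀, y₁))
          = prob p (fun ω => ((X₀ ω, Y₀ ω), (X₁ ω, Y₁ ω))) ((x₀, y₀), (x₁, y₁)) :=
        prob_congr p fun ω => by simp only [Prod.ext_iff]; tauto
      rw [e1, hmarg]
      exact e2.trans (hindep (x₀, y₀) (x₁, y₁))
    have hA0B0 : ∀ u, prob ν (fun ω => (ω.1.1, ω.2.1.1)) u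
        = prob p (fun ω => (X₀ ω, Y₀ ω)) u := by
      intro u
      rw [prob_fst ν (fun ω => (ω.1.1, ω.2.1.1)) (fun ω => (ω.1.2, ω.2.1.2)) u,
        Finset.sum_congr rfl fun w _ => hpair u w, ← Finset.mul_sum, sum_prob, hp.2, mul_one]
    have hA1B1 : ∀ w, prob ν (fun ω => (ω.1.2, ω.2.1.2)) w
        = prob p (fun ω => (X₁ ω, Y₁ ω)) w := by
      intro w
      rw [prob_snd ν (fun ω => (ω.1.1, ω.2.1.1)) (fun ω => (ω.1.2, ω.2.1.2)) w,
        Finset.sum_congr rfl fun u _ => hpair u w, ← Finset.sum_mul, sum_prob, hp.2, one_mul]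
    have hind : ∀ u w, prob ν (fun ω => ((ω.1.1, ω.2.1.1), (ω.1.2, ω.2.1.2))) (u, w)
        = prob ν (fun ω => (ω.1.1, ω.2.1.1)) u * prob ν (fun ω => (ω.1.2, ω.2.1.2)) w :=
      fun u w => by rw [hpair u w, ← hA0B0 u, ← hA1B1 w]
    have K1 : cmi ν (fun ω => ((ω.2.2, ω.1.2, ω.2.1.2) : Fin m × 𝒳₁ × 𝒴₁)) (fun ω => ω.2.1.1) (fun ω => ω.1.1) + cmi ν (fun ω => ω.2.2) (fun ω => ω.2.1.2) (fun ω => ω.1.2) ≤ v.1 :=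
      le_trans (key1 ν hν (fun ω => ω.1.1) (fun ω => ω.1.2) (fun ω => ω.2.1.1) (fun ω => ω.2.1.2) (fun ω => ω.2.2) hind) h1
    have hindsw : ∀ u w, prob ν (fun ω => ((ω.2.1.1, ω.1.1), (ω.2.1.2, ω.1.2))) (u, w)
        = prob ν (fun ω => (ω.2.1.1, ω.1.1)) u * prob ν (fun ω => (ω.2.1.2, ω.1.2)) w :=
      fun u w => indep_comp ν (fun ω => (ω.1.1, ω.2.1.1)) (fun ω => (ω.1.2, ω.2.1.2)) hind
        (fun s => (s.2, s.1)) (fun s => (s.2, s.1)) u w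
    have swapQ : cmi ν (fun ω => ((ω.2.2, ω.2.1.2, ω.1.2) : Fin m × 𝒴₁ × 𝒳₁)) (fun ω => ω.1.1) (fun ω => ω.2.1.1)
        = cmi ν (fun ω => ((ω.2.2, ω.1.2, ω.2.1.2) : Fin m × 𝒳₁ × 𝒴₁)) (fun ω => ω.1.1) (fun ω => ω.2.1.1) :=
      cmi_congr ν (fun s => (s.1, s.2.2, s.2.1)) (fun s => (s.1, s.2.2, s.2.1))
        (fun _ => rfl) (fun _ => rfl) id id (fun _ => rfl) (fun _ => rfl)
        id id (fun _ => rfl) (fun _ => rfl)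
    have K2 : cmi ν (fun ω => ((ω.2.2, ω.1.2, ω.2.1.2) : Fin m × 𝒳₁ × 𝒴₁)) (fun ω => ω.1.1) (fun ω => ω.2.1.1) + cmi ν (fun ω => ω.2.2) (fun ω => ω.1.2) (fun ω => ω.2.1.2) ≤ v.2.1 := by
      rw [← swapQ]
      exact le_trans (key1 ν hν (fun ω => ω.2.1.1) (fun ω => ω.2.1.2) (fun ω => ω.1.1) (fun ω => ω.1.2) (fun ω => ω.2.2) hindsw) h2
    have K3 : cmi ν (fun ω => ω.1.1) (fun ω => ω.2.1.1) (fun ω => ((ω.2.2, ω.1.2, ω.2.1.2) : Fin m × 𝒳₁ × 𝒴₁)) + cmi ν (fun ω => ω.1.2) (fun ω => ω.2.1.2) (fun ω => ω.2.2) ≤ v.2.2 :=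
      le_trans (key3 ν hν (fun ω => ω.1.1) (fun ω => ω.1.2) (fun ω => ω.2.1.1) (fun ω => ω.2.1.2) (fun ω => ω.2.2)) h3
    have hc1 : 0 ≤ cmi ν (fun ω => ((ω.2.2, ω.1.2, ω.2.1.2) : Fin m × 𝒳₁ × 𝒴₁)) (fun ω => ω.2.1.1) (fun ω => ω.1.1) := cmi_nonneg ν hν.1 _ _ _
    have hc2 : 0 ≤ cmi ν (fun ω => ((ω.2.2, ω.1.2, ω.2.1.2) : Fin m × 𝒳₁ × 𝒴₁)) (fun ω => ω.1.1) (fun ω => ω.2.1.1) := cmi_nonneg ν hν.1 _ _ _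
    have hc3 : 0 ≤ cmi ν (fun ω => ω.1.1) (fun ω => ω.2.1.1) (fun ω => ((ω.2.2, ω.1.2, ω.2.1.2) : Fin m × 𝒳₁ × 𝒴₁)) := cmi_nonneg ν hν.1 _ _ _
    have hd1 : 0 ≤ cmi ν (fun ω => ω.2.2) (fun ω => ω.2.1.2) (fun ω => ω.1.2) := cmi_nonneg ν hν.1 _ _ _
    have hd2 : 0 ≤ cmi ν (fun ω => ω.2.2) (fun ω => ω.1.2) (fun ω => ω.2.1.2) := cmi_nonneg ν hν.1 _ _ _
    have hd3 : 0 ≤ cmi ν (fun ω => ω.1.2) (fun ω => ω.2.1.2) (fun ω => ω.2.2) := cmi_nonneg ν hν.1 _ _ _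
    refine Set.mem_add.mpr ⟨(cmi ν (fun ω => ((ω.2.2, ω.1.2, ω.2.1.2) : Fin m × 𝒳₁ × 𝒴₁)) (fun ω => ω.2.1.1) (fun ω => ω.1.1), cmi ν (fun ω => ((ω.2.2, ω.1.2, ω.2.1.2) : Fin m × 𝒳₁ × 𝒴₁)) (fun ω => ω.1.1) (fun ω => ω.2.1.1), cmi ν (fun ω => ω.1.1) (fun ω => ω.2.1.1) (fun ω => ((ω.2.2, ω.1.2, ω.2.1.2) : Fin m × 𝒳₁ × 𝒴₁))),
      ⟨Fintype.card (Fin m × 𝒳₁ × 𝒴₁), prob ν (fun ω => (ω.1.1, ω.2.1.1, Fintype.equivFin (Fin m × 𝒳₁ × 𝒴₁) (ω.2.2, ω.1.2, ω.2.1.2))),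
        ⟨fun t => prob_nonneg ν hν.1 _ t, by rw [sum_prob]; exact hν.2⟩, ?_, ?_, ?_, ?_,
        hc1, hc2, hc3⟩,
      (v.1 - cmi ν (fun ω => ((ω.2.2, ω.1.2, ω.2.1.2) : Fin m × 𝒳₁ × 𝒴₁)) (fun ω => ω.2.1.1) (fun ω => ω.1.1), v.2.1 - cmi ν (fun ω => ((ω.2.2, ω.1.2, ω.2.1.2) : Fin m × 𝒳₁ × 𝒴₁)) (fun ω => ω.1.1) (fun ω => ω.2.1.1), v.2.2 - cmi ν (fun ω => ω.1.1) (fun ω => ω.2.1.1) (fun ω => ((ω.2.2, ω.1.2, ω.2.1.2) : Fin m × 𝒳₁ × 𝒴₁))),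
      ⟨m, prob ν (fun ω => (ω.1.2, ω.2.1.2, ω.2.2)),
        ⟨fun t => prob_nonneg ν hν.1 _ t, by rw [sum_prob]; exact hν.2⟩, ?_, ?_, ?_, ?_,
        by dsimp only; linarith, by dsimp only; linarith, by dsimp only; linarith⟩, ?_⟩
    · intro ab
      rw [prob_comp ν (fun ω => (ω.1.1, ω.2.1.1, Fintype.equivFin (Fin m × 𝒳₁ × 𝒴₁) (ω.2.2, ω.1.2, ω.2.1.2))) (fun t => (t.1, t.2.1)) ab]
      exact hA0B0 ab
    · exact le_of_eq ((cmi_map ν (fun ω => (ω.1.1, ω.2.1.1, Fintype.equivFin (Fin m × 𝒳₁ × 𝒴₁) (ω.2.2, ω.1.2, ω.2.1.2))) (fun t => t.2.2) (fun t => t.2.1) (fun t => t.1)).trans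
        (cmi_congr ν (Fintype.equivFin (Fin m × 𝒳₁ × 𝒴₁)).symm (Fintype.equivFin (Fin m × 𝒳₁ × 𝒴₁))
          (fun ω => ((Fintype.equivFin (Fin m × 𝒳₁ × 𝒴₁)).symm_apply_apply _).symm) (fun ω => rfl)
          id id (fun _ => rfl) (fun _ => rfl) id id (fun _ => rfl) (fun _ => rfl)))
    · exact le_of_eq ((cmi_map ν (fun ω => (ω.1.1, ω.2.1.1, Fintype.equivFin (Fin m × 𝒳₁ × 𝒴₁) (ω.2.2, ω.1.2, ω.2.1.2))) (fun t => t.2.2) (fun t => t.1) (fun t => t.2.1)).trans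
        (cmi_congr ν (Fintype.equivFin (Fin m × 𝒳₁ × 𝒴₁)).symm (Fintype.equivFin (Fin m × 𝒳₁ × 𝒴₁))
          (fun ω => ((Fintype.equivFin (Fin m × 𝒳₁ × 𝒴₁)).symm_apply_apply _).symm) (fun ω => rfl)
          id id (fun _ => rfl) (fun _ => rfl) id id (fun _ => rfl) (fun _ => rfl)))
    · exact le_of_eq ((cmi_map ν (fun ω => (ω.1.1, ω.2.1.1, Fintype.equivFin (Fin m × 𝒳₁ × 𝒴₁) (ω.2.2, ω.1.2, ω.2.1.2))) (fun t => t.1) (fun t => t.2.1) (fun t => t.2.2)).trans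
        (cmi_congr ν id id (fun _ => rfl) (fun _ => rfl) id id (fun _ => rfl) (fun _ => rfl)
          (Fintype.equivFin (Fin m × 𝒳₁ × 𝒴₁)).symm (Fintype.equivFin (Fin m × 𝒳₁ × 𝒴₁))
          (fun ω => ((Fintype.equivFin (Fin m × 𝒳₁ × 𝒴₁)).symm_apply_apply _).symm) (fun ω => rfl)))
    · intro ab
      rw [prob_comp ν (fun ω => (ω.1.2, ω.2.1.2, ω.2.2)) (fun t => (t.1, t.2.1)) ab]
      exact hA1B1 ab
    · rw [cmi_map ν (fun ω => (ω.1.2, ω.2.1.2, ω.2.2)) (fun t => t.2.2) (fun t => t.2.1) (fun t => t.1)]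
      dsimp only
      linarith
    · rw [cmi_map ν (fun ω => (ω.1.2, ω.2.1.2, ω.2.2)) (fun t => t.2.2) (fun t => t.1) (fun t => t.2.1)]
      dsimp only
      linarith
    · rw [cmi_map ν (fun ω => (ω.1.2, ω.2.1.2, ω.2.2)) (fun t => t.1) (fun t => t.2.1) (fun t => t.2.2)]
      dsimp only
      linarith
    · rw [Prod.mk_add_mk, Prod.mk_add_mk]
      simp
  · intro hv
    obtain ⟨v₀, hv₀, v₁, hv₁, rfl⟩ := Set.mem_add.mp hv
    obtain ⟨m₀, ν₀, hν₀, hmarg₀, g1, g2, g3, hv01, hv02, hv03⟩ := hv₀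
    obtain ⟨m₁, ν₁, hν₁, hmarg₁, f1, f2, f3, hv11, hv12, hv13⟩ := hv₁
    refine ⟨m₀ * m₁,
      fun ω => ν₀ ((splitEquiv 𝒳₀ 𝒴₀ 𝒳₁ 𝒴₁ m₀ m₁) ω).1
        * ν₁ ((splitEquiv 𝒳₀ 𝒴₀ 𝒳₁ 𝒴₁ m₀ m₁) ω).2, ?_, ?_, ?_, ?_, ?_, ?_, ?_, ?_⟩
    · constructor
      · exact fun ω => mul_nonneg (hν₀.1 _) (hν₁.1 _)
      · rw [Equiv.sum_comp (splitEquiv 𝒳₀ 𝒴₀ 𝒳₁ 𝒴₁ m₀ m₁)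
          (fun t => ν₀ t.1 * ν₁ t.2), Fintype.sum_prod_type,
          show (∑ a, ∑ b, ν₀ a * ν₁ b) = (∑ a, ν₀ a) * (∑ b, ν₁ b) from
            (Finset.sum_mul_sum Finset.univ Finset.univ ν₀ ν₁).symm, hν₀.2, hν₁.2, one_mul]
    · rintro ⟨⟨x₀, x₁⟩, y₀, y₁⟩
      have s1 : prob (fun ω => ν₀ ((splitEquiv 𝒳₀ 𝒴₀ 𝒳₁ 𝒴₁ m₀ m₁) ω).1
            * ν₁ ((splitEquiv 𝒳₀ 𝒴₀ 𝒳₁ 𝒴₁ m₀ m₁) ω).2)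
            (fun ω => (ω.1, ω.2.1)) ((x₀, x₁), (y₀, y₁))
          = prob (fun t : (𝒳₀ × 𝒴₀ × Fin m₀) × (𝒳₁ × 𝒴₁ × Fin m₁) => ν₀ t.1 * ν₁ t.2)
            (fun t => ((t.1.1, t.2.1), (t.1.2.1, t.2.2.1))) ((x₀, x₁), (y₀, y₁)) :=
        prob_equiv (splitEquiv 𝒳₀ 𝒴₀ 𝒳₁ 𝒴₁ m₀ m₁)
          (fun t => ν₀ t.1 * ν₁ t.2) (fun t => ((t.1.1, t.2.1), (t.1.2.1, t.2.2.1))) _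
      have s2 : prob (fun t : (𝒳₀ × 𝒴₀ × Fin m₀) × (𝒳₁ × 𝒴₁ × Fin m₁) => ν₀ t.1 * ν₁ t.2)
            (fun t => ((t.1.1, t.2.1), (t.1.2.1, t.2.2.1))) ((x₀, x₁), (y₀, y₁))
          = prob (fun t : (𝒳₀ × 𝒴₀ × Fin m₀) × (𝒳₁ × 𝒴₁ × Fin m₁) => ν₀ t.1 * ν₁ t.2)
            (fun t => ((t.1.1, t.1.2.1), (t.2.1, t.2.2.1))) ((x₀, y₀), (x₁, y₁)) :=
        prob_congr _ fun t => by
          simp only [Prod.ext_iff]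
          tauto
      have s3 : prob (fun t : (𝒳₀ × 𝒴₀ × Fin m₀) × (𝒳₁ × 𝒴₁ × Fin m₁) => ν₀ t.1 * ν₁ t.2)
            (fun t => ((t.1.1, t.1.2.1), (t.2.1, t.2.2.1))) ((x₀, y₀), (x₁, y₁))
          = prob ν₀ (fun s => (s.1, s.2.1)) (x₀, y₀) * prob ν₁ (fun s => (s.1, s.2.1)) (x₁, y₁) :=
        prob_prod ν₀ ν₁ (fun s => (s.1, s.2.1)) (fun s => (s.1, s.2.1)) _ _
      have s5 : prob p (fun ω => ((X₀ ω, X₁ ω), (Y₀ ω, Y₁ ω))) ((x₀, x₁), (y₀, y₁))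
          = prob p (fun ω => ((X₀ ω, Y₀ ω), (X₁ ω, Y₁ ω))) ((x₀, y₀), (x₁, y₁)) :=
        prob_congr p fun ω => by
          simp only [Prod.ext_iff]
          tauto
      rw [s1, s2, s3, hmarg₀, hmarg₁]
      exact ((hindep (x₀, y₀) (x₁, y₁)).symm.trans s5.symm)
    · have t1 : cmi (fun ω => ν₀ ((splitEquiv 𝒳₀ 𝒴₀ 𝒳₁ 𝒴₁ m₀ m₁) ω).1
            * ν₁ ((splitEquiv 𝒳₀ 𝒴₀ 𝒳₁ 𝒴₁ m₀ m₁) ω).2)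
            (fun ω => finProdFinEquiv ((((splitEquiv 𝒳₀ 𝒴₀ 𝒳₁ 𝒴₁ m₀ m₁) ω).1.2.2,
              ((splitEquiv 𝒳₀ 𝒴₀ 𝒳₁ 𝒴₁ m₀ m₁) ω).2.2.2)))
            (fun ω => ω.2.1) (fun ω => ω.1)
          = cmi (fun t : (𝒳₀ × 𝒴₀ × Fin m₀) × (𝒳₁ × 𝒴₁ × Fin m₁) => ν₀ t.1 * ν₁ t.2)
            (fun t => finProdFinEquiv (t.1.2.2, t.2.2.2))
            (fun t => (t.1.2.1, t.2.2.1)) (fun t => (t.1.1, t.2.1)) :=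
        cmi_equiv (splitEquiv 𝒳₀ 𝒴₀ 𝒳₁ 𝒴₁ m₀ m₁) (fun t => ν₀ t.1 * ν₁ t.2)
          (fun t => finProdFinEquiv (t.1.2.2, t.2.2.2))
          (fun t => (t.1.2.1, t.2.2.1)) (fun t => (t.1.1, t.2.1))
      have t2 : cmi (fun t : (𝒳₀ × 𝒴₀ × Fin m₀) × (𝒳₁ × 𝒴₁ × Fin m₁) => ν₀ t.1 * ν₁ t.2)
            (fun t => finProdFinEquiv (t.1.2.2, t.2.2.2))
            (fun t => (t.1.2.1, t.2.2.1)) (fun t => (t.1.1, t.2.1))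
          = cmi (fun t : (𝒳₀ × 𝒴₀ × Fin m₀) × (𝒳₁ × 𝒴₁ × Fin m₁) => ν₀ t.1 * ν₁ t.2)
            (fun t => (t.1.2.2, t.2.2.2))
            (fun t => (t.1.2.1, t.2.2.1)) (fun t => (t.1.1, t.2.1)) :=
        cmi_congr _ finProdFinEquiv.symm finProdFinEquiv
          (fun t => (finProdFinEquiv.symm_apply_apply _).symm) (fun t => rfl)
          id id (fun _ => rfl) (fun _ => rfl) id id (fun _ => rfl) (fun _ => rfl)
      have t3 : cmi (fun t : (𝒳₀ × 𝒴₀ × Fin m₀) × (𝒳₁ × 𝒴₁ × Fin m₁) => ν₀ t.1 * ν₁ t.2)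
            (fun t => (t.1.2.2, t.2.2.2))
            (fun t => (t.1.2.1, t.2.2.1)) (fun t => (t.1.1, t.2.1))
          = cmi ν₀ (fun s => s.2.2) (fun s => s.2.1) (fun s => s.1)
            + cmi ν₁ (fun s => s.2.2) (fun s => s.2.1) (fun s => s.1) :=
        cmi_prod ν₀ ν₁ hν₀ hν₁ (fun s => s.2.2) (fun s => s.2.1) (fun s => s.1)
          (fun s => s.2.2) (fun s => s.2.1) (fun s => s.1)
      have hXeq : (fun ω : (𝒳₀ × 𝒳₁) × (𝒴₀ × 𝒴₁) × Fin (m₀ * m₁) => ω.2.2)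
          = fun ω => finProdFinEquiv ((((splitEquiv 𝒳₀ 𝒴₀ 𝒳₁ 𝒴₁ m₀ m₁) ω).1.2.2,
              ((splitEquiv 𝒳₀ 𝒴₀ 𝒳₁ 𝒴₁ m₀ m₁) ω).2.2.2)) :=
        funext fun ω => (finProdFinEquiv.apply_symm_apply ω.2.2).symm
      rw [hXeq, t1, t2, t3, Prod.fst_add]
      exact add_le_add g1 f1
    · have t1 : cmi (fun ω => ν₀ ((splitEquiv 𝒳₀ 𝒴₀ 𝒳₁ 𝒴₁ m₀ m₁) ω).1
            * ν₁ ((splitEquiv 𝒳₀ 𝒴₀ 𝒳₁ 𝒴₁ m₀ m₁) ω).2)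
            (fun ω => finProdFinEquiv ((((splitEquiv 𝒳₀ 𝒴₀ 𝒳₁ 𝒴₁ m₀ m₁) ω).1.2.2,
              ((splitEquiv 𝒳₀ 𝒴₀ 𝒳₁ 𝒴₁ m₀ m₁) ω).2.2.2)))
            (fun ω => ω.1) (fun ω => ω.2.1)
          = cmi (fun t : (𝒳₀ × 𝒴₀ × Fin m₀) × (𝒳₁ × 𝒴₁ × Fin m₁) => ν₀ t.1 * ν₁ t.2)
            (fun t => finProdFinEquiv (t.1.2.2, t.2.2.2))
            (fun t => (t.1.1, t.2.1)) (fun t => (t.1.2.1, t.2.2.1)) :=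
        cmi_equiv (splitEquiv 𝒳₀ 𝒴₀ 𝒳₁ 𝒴₁ m₀ m₁) (fun t => ν₀ t.1 * ν₁ t.2)
          (fun t => finProdFinEquiv (t.1.2.2, t.2.2.2))
          (fun t => (t.1.1, t.2.1)) (fun t => (t.1.2.1, t.2.2.1))
      have t2 : cmi (fun t : (𝒳₀ × 𝒴₀ × Fin m₀) × (𝒳₁ × 𝒴₁ × Fin m₁) => ν₀ t.1 * ν₁ t.2)
            (fun t => finProdFinEquiv (t.1.2.2, t.2.2.2))
            (fun t => (t.1.1, t.2.1)) (fun t => (t.1.2.1, t.2.2.1))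
          = cmi (fun t : (𝒳₀ × 𝒴₀ × Fin m₀) × (𝒳₁ × 𝒴₁ × Fin m₁) => ν₀ t.1 * ν₁ t.2)
            (fun t => (t.1.2.2, t.2.2.2))
            (fun t => (t.1.1, t.2.1)) (fun t => (t.1.2.1, t.2.2.1)) :=
        cmi_congr _ finProdFinEquiv.symm finProdFinEquiv
          (fun t => (finProdFinEquiv.symm_apply_apply _).symm) (fun t => rfl)
          id id (fun _ => rfl) (fun _ => rfl) id id (fun _ => rfl) (fun _ => rfl)
      have t3 : cmi (fun t : (𝒳₀ × 𝒴₀ × Fin m₀) × (𝒳₁ × 𝒴₁ × Fin m₁) => ν₀ t.1 * ν₁ t.2)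
            (fun t => (t.1.2.2, t.2.2.2))
            (fun t => (t.1.1, t.2.1)) (fun t => (t.1.2.1, t.2.2.1))
          = cmi ν₀ (fun s => s.2.2) (fun s => s.1) (fun s => s.2.1)
            + cmi ν₁ (fun s => s.2.2) (fun s => s.1) (fun s => s.2.1) :=
        cmi_prod ν₀ ν₁ hν₀ hν₁ (fun s => s.2.2) (fun s => s.1) (fun s => s.2.1)
          (fun s => s.2.2) (fun s => s.1) (fun s => s.2.1)
      have hXeq : (fun ω : (𝒳₀ × 𝒳₁) × (𝒴₀ × 𝒴₁) × Fin (m₀ * m₁) => ω.2.2)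
          = fun ω => finProdFinEquiv ((((splitEquiv 𝒳₀ 𝒴₀ 𝒳₁ 𝒴₁ m₀ m₁) ω).1.2.2,
              ((splitEquiv 𝒳₀ 𝒴₀ 𝒳₁ 𝒴₁ m₀ m₁) ω).2.2.2)) :=
        funext fun ω => (finProdFinEquiv.apply_symm_apply ω.2.2).symm
      rw [hXeq, t1, t2, t3]
      have h21 : (v₀ + v₁).2.1 = v₀.2.1 + v₁.2.1 := rfl
      rw [h21]
      exact add_le_add g2 f2
    · have t1 : cmi (fun ω => ν₀ ((splitEquiv 𝒳₀ 𝒴₀ 𝒳₁ 𝒴₁ m₀ m₁) ω).1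
            * ν₁ ((splitEquiv 𝒳₀ 𝒴₀ 𝒳₁ 𝒴₁ m₀ m₁) ω).2)
            (fun ω => ω.1) (fun ω => ω.2.1)
            (fun ω => finProdFinEquiv ((((splitEquiv 𝒳₀ 𝒴₀ 𝒳₁ 𝒴₁ m₀ m₁) ω).1.2.2,
              ((splitEquiv 𝒳₀ 𝒴₀ 𝒳₁ 𝒴₁ m₀ m₁) ω).2.2.2)))
          = cmi (fun t : (𝒳₀ × 𝒴₀ × Fin m₀) × (𝒳₁ × 𝒴₁ × Fin m₁) => ν₀ t.1 * ν₁ t.2)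
            (fun t => (t.1.1, t.2.1)) (fun t => (t.1.2.1, t.2.2.1))
            (fun t => finProdFinEquiv (t.1.2.2, t.2.2.2)) :=
        cmi_equiv (splitEquiv 𝒳₀ 𝒴₀ 𝒳₁ 𝒴₁ m₀ m₁) (fun t => ν₀ t.1 * ν₁ t.2)
          (fun t => (t.1.1, t.2.1)) (fun t => (t.1.2.1, t.2.2.1))
          (fun t => finProdFinEquiv (t.1.2.2, t.2.2.2))
      have t2 : cmi (fun t : (𝒳₀ × 𝒴₀ × Fin m₀) × (𝒳₁ × 𝒴₁ × Fin m₁) => ν₀ t.1 * ν₁ t.2)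
            (fun t => (t.1.1, t.2.1)) (fun t => (t.1.2.1, t.2.2.1))
            (fun t => finProdFinEquiv (t.1.2.2, t.2.2.2))
          = cmi (fun t : (𝒳₀ × 𝒴₀ × Fin m₀) × (𝒳₁ × 𝒴₁ × Fin m₁) => ν₀ t.1 * ν₁ t.2)
            (fun t => (t.1.1, t.2.1)) (fun t => (t.1.2.1, t.2.2.1))
            (fun t => (t.1.2.2, t.2.2.2)) :=
        cmi_congr _ id id (fun _ => rfl) (fun _ => rfl) id id (fun _ => rfl) (fun _ => rfl)
          finProdFinEquiv.symm finProdFinEquiv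
          (fun t => (finProdFinEquiv.symm_apply_apply _).symm) (fun t => rfl)
      have t3 : cmi (fun t : (𝒳₀ × 𝒴₀ × Fin m₀) × (𝒳₁ × 𝒴₁ × Fin m₁) => ν₀ t.1 * ν₁ t.2)
            (fun t => (t.1.1, t.2.1)) (fun t => (t.1.2.1, t.2.2.1))
            (fun t => (t.1.2.2, t.2.2.2))
          = cmi ν₀ (fun s => s.1) (fun s => s.2.1) (fun s => s.2.2)
            + cmi ν₁ (fun s => s.1) (fun s => s.2.1) (fun s => s.2.2) :=
        cmi_prod ν₀ ν₁ hν₀ hν₁ (fun s => s.1) (fun s => s.2.1) (fun s => s.2.2)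
          (fun s => s.1) (fun s => s.2.1) (fun s => s.2.2)
      have hXeq : (fun ω : (𝒳₀ × 𝒳₁) × (𝒴₀ × 𝒴₁) × Fin (m₀ * m₁) => ω.2.2)
          = fun ω => finProdFinEquiv ((((splitEquiv 𝒳₀ 𝒴₀ 𝒳₁ 𝒴₁ m₀ m₁) ω).1.2.2,
              ((splitEquiv 𝒳₀ 𝒴₀ 𝒳₁ 𝒴₁ m₀ m₁) ω).2.2.2)) :=
        funext fun ω => (finProdFinEquiv.apply_symm_apply ω.2.2).symm
      rw [hXeq, t1, t2, t3]
      have h22 : (v₀ + v₁).2.2 = v₀.2.2 + v₁.2.2 := rfl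
      rw [h22]
      exact add_le_add g3 f3
    · rw [Prod.fst_add]
      exact add_nonneg hv01 hv11
    · have h21 : (v₀ + v₁).2.1 = v₀.2.1 + v₁.2.1 := rfl
      rw [h21]
      exact add_nonneg hv02 hv12
    · have h22 : (v₀ + v₁).2.2 = v₀.2.2 + v₁.2.2 := rfl
      rw [h22]
      exact add_nonneg hv03 hv13
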